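/- There exist constants C > 0 and R₀ > 0 such that for all R ≥ R₀, |4π ∫₀^R s² (1+s²)^(−1/2) ds − (2πR² − 2π log R + π(1 − log 4) − (3π/4) R^(−2))| ≤ C R^(−4). In other words, the volume of the hyperbolic geodesic ball of coordinate radius R satisfies Vol₀(R) = 2πR² − 2π log R + π(1 − log 4) − (3π/4)R^(−2) + O(R^(−4)) as R → ∞. -/

import Mathlib

/-!
The integral has the closed form `(R √(1 + R²) - arsinh R) / 2`. Writing
`t = (R + √(1 + R²)) / (2R)`, one has `4 t (t - 1) R² = 1` and `arsinh R = log 2 + log R + log t`,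
so the error of the expansion is exactly `2π g(t)` with
`g(t) = 1 / (2t) - 1 / 2 + 3/2 t (t - 1) - log t`. The bounds `1 - 1/t ≤ log t ≤ t - 1` give
`0 ≤ g(t) ≤ 3 (t - 1)²`, and `t - 1 ≤ 1 / (4R²)`, so the error is at most `3π / (8R⁴)`.
-/

open Real

lemma hasDerivAt_mul_sqrt_one_add_sq_sub_arsinh (s : ℝ) :
    HasDerivAt (fun t : ℝ => (t * √(1 + t ^ 2) - arsinh t) / 2) (s ^ 2 / √(1 + s ^ 2)) s := by
  have hpos : 0 < 1 + s ^ 2 := by positivity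
  have hsqrt : HasDerivAt (fun t : ℝ => √(1 + t ^ 2)) (s / √(1 + s ^ 2)) s := by
    convert ((hasDerivAt_pow 2 s).const_add 1).sqrt hpos.ne' using 1
    field_simp
    ring
  refine (((hasDerivAt_id' s).mul hsqrt).sub (hasDerivAt_arsinh s)).div_const 2 |>.congr_deriv ?_
  have hroot : √(1 + s ^ 2) ^ 2 = 1 + s ^ 2 := sq_sqrt hpos.le
  field_simp
  linear_combination hroot

lemma integral_sq_div_sqrt_one_add_sq (R : ℝ) :
    ∫ s in (0 : ℝ)..R, s ^ 2 / √(1 + s ^ 2) = (R * √(1 + R ^ 2) - arsinh R) / 2 := by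
  have hcont : Continuous fun s : ℝ => s ^ 2 / √(1 + s ^ 2) := by
    fun_prop (disch := exact fun s => (sqrt_pos.2 (by positivity)).ne')
  rw [intervalIntegral.integral_eq_sub_of_hasDerivAt
    (fun s _ => hasDerivAt_mul_sqrt_one_add_sq_sub_arsinh s) (hcont.intervalIntegrable 0 R)]
  simp

noncomputable def ballVolumeRemainder (t : ℝ) : ℝ :=
  1 / (2 * t) - 1 / 2 + 3 / 2 * t * (t - 1) - log t

lemma ballVolumeRemainder_nonneg {t : ℝ} (ht : 1 ≤ t) : 0 ≤ ballVolumeRemainder t := by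
  have ht0 : 0 < t := by linarith
  have hlog := log_le_sub_one_of_pos ht0
  have hid : 1 / (2 * t) - 1 / 2 + 3 / 2 * t * (t - 1) - (t - 1)
      = (t - 1) ^ 2 * (3 * t + 1) / (2 * t) := by
    field_simp
    ring
  have : 0 ≤ (t - 1) ^ 2 * (3 * t + 1) / (2 * t) := by positivity
  unfold ballVolumeRemainder
  linarith

lemma ballVolumeRemainder_le {t : ℝ} (ht : 1 ≤ t) : ballVolumeRemainder t ≤ 3 * (t - 1) ^ 2 := by
  have ht0 : 0 < t := by linarith
  have hlog := one_sub_inv_le_log_of_pos ht0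
  have hid : 1 / (2 * t) - 1 / 2 + 3 / 2 * t * (t - 1) - (1 - t⁻¹)
      = 3 * (t - 1) ^ 2 - 3 / 2 * (t - 1) ^ 3 / t := by
    field_simp
    ring
  have : 0 ≤ 3 / 2 * (t - 1) ^ 3 / t := by
    have : 0 ≤ t - 1 := by linarith
    positivity
  unfold ballVolumeRemainder
  linarith

noncomputable def arsinhRatio (R : ℝ) : ℝ := (R + √(1 + R ^ 2)) / (2 * R)

lemma sqrt_one_add_sq_eq_mul_arsinhRatio {R : ℝ} (hR : 0 < R) :
    √(1 + R ^ 2) = R * (2 * arsinhRatio R - 1) := by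
  rw [arsinhRatio]
  field_simp
  ring

lemma four_mul_arsinhRatio_mul_sub_one_mul_sq {R : ℝ} (hR : 0 < R) :
    4 * arsinhRatio R * (arsinhRatio R - 1) * R ^ 2 = 1 := by
  have hroot : √(1 + R ^ 2) ^ 2 = 1 + R ^ 2 := sq_sqrt (by positivity)
  rw [sqrt_one_add_sq_eq_mul_arsinhRatio hR] at hroot
  linear_combination hroot

lemma one_le_arsinhRatio {R : ℝ} (hR : 0 < R) : 1 ≤ arsinhRatio R := by
  have : R ≤ √(1 + R ^ 2) := le_sqrt_of_sq_le (by linarith)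
  rw [arsinhRatio, one_le_div (by positivity)]
  linarith

lemma arsinhRatio_sub_one_le {R : ℝ} (hR : 0 < R) : arsinhRatio R - 1 ≤ 1 / (4 * R ^ 2) := by
  rw [le_div_iff₀ (by positivity)]
  nlinarith [four_mul_arsinhRatio_mul_sub_one_mul_sq hR, one_le_arsinhRatio hR]

lemma arsinh_eq_log_two_add_log_add_log_arsinhRatio {R : ℝ} (hR : 0 < R) :
    arsinh R = log 2 + log R + log (arsinhRatio R) := by
  rw [arsinh, ← log_mul two_ne_zero hR.ne',
    ← log_mul (by positivity) (by linarith [one_le_arsinhRatio hR]), arsinhRatio]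
  field_simp

lemma hyperbolic_ball_volume_sub_expansion {R : ℝ} (hR : 0 < R) :
    4 * π * (∫ s in (0 : ℝ)..R, s ^ 2 / √(1 + s ^ 2))
        - (2 * π * R ^ 2 - 2 * π * log R + π * (1 - log 4) - (3 * π / 4) / R ^ 2)
      = 2 * π * ballVolumeRemainder (arsinhRatio R) := by
  have ht0 : 0 < arsinhRatio R := by linarith [one_le_arsinhRatio hR]
  have hlog4 : log 4 = 2 * log 2 := by
    rw [show (4 : ℝ) = 2 ^ 2 by norm_num, log_pow, Nat.cast_ofNat]
  rw [integral_sq_div_sqrt_one_add_sq, arsinh_eq_log_two_add_log_add_log_arsinhRatio hR, hlog4,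
    ballVolumeRemainder, sqrt_one_add_sq_eq_mul_arsinhRatio hR]
  field_simp
  linear_combination (8 * R ^ 2 - 6 * arsinhRatio R) * four_mul_arsinhRatio_mul_sub_one_mul_sq hR

theorem hyperbolic_ball_volume_expansion :
    ∃ C > (0:ℝ), ∃ R₀ > (0:ℝ), ∀ R ≥ R₀,
      |4 * π * (∫ s in (0:ℝ)..R, s ^ 2 / Real.sqrt (1 + s ^ 2))
          - (2 * π * R ^ 2 - 2 * π * Real.log R + π * (1 - Real.log 4)
              - (3 * π / 4) / R ^ 2)| ≤ C / R ^ 4 := by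
  refine ⟨3 * π / 8, by positivity, 1, one_pos, fun R hR => ?_⟩
  have hR0 : 0 < R := by linarith
  have ht := one_le_arsinhRatio hR0
  rw [hyperbolic_ball_volume_sub_expansion hR0,
    abs_of_nonneg (by have := ballVolumeRemainder_nonneg ht; positivity)]
  calc 2 * π * ballVolumeRemainder (arsinhRatio R)
      ≤ 2 * π * (3 * (arsinhRatio R - 1) ^ 2) := by gcongr; exact ballVolumeRemainder_le ht
    _ ≤ 2 * π * (3 * (1 / (4 * R ^ 2)) ^ 2) := by
      gcongr
      exact arsinhRatio_sub_one_le hR0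
    _ = 3 * π / 8 / R ^ 4 := by field_simp; ring
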